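/- arXiv:1706.07112 — 4 statements merged into one kernel-verified Lean document; each statement's English description precedes it below -/
import Mathlib

section
/- Let μ be a finite Borel measure on ℝⁿ with finite first moment, satisfying μ(ℝⁿ) ≤ 2 and μ({0}) ≥ 1. Then M(μ) = Z(μ), where Z(μ) = { ∫ x f(x) dμ : f measurable, 0 ≤ f ≤ 1 }. -/
open MeasureTheory

noncomputable def metronoid {n : ℕ} (μ : Measure (EuclideanSpace ℝ (Fin n))) :
    Set (EuclideanSpace ℝ (Fin n)) :=
  {y | ∃ f : EuclideanSpace ℝ (Fin n) → ℝ, Measurable f ∧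
    (∀ x, f x ∈ Set.Icc (0:ℝ) 1) ∧ (∫ x, f x ∂μ) = 1 ∧ (∫ x, f x • x ∂μ) = y}

/-- `Z(μ)`: drop the normalization constraint. -/
noncomputable def zonoidSet {n : ℕ} (μ : Measure (EuclideanSpace ℝ (Fin n))) :
    Set (EuclideanSpace ℝ (Fin n)) :=
  {y | ∃ f : EuclideanSpace ℝ (Fin n) → ℝ, Measurable f ∧
    (∀ x, f x ∈ Set.Icc (0:ℝ) 1) ∧ (∫ x, f x • x ∂μ) = y}

/-! Changing `f` at the origin does not change `∫ x, f x • x ∂μ`, since the weight `x` vanishes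
there. If `μ {0} ≥ 1` and `μ {0}ᶜ ≤ 1`, the value at the origin can be chosen in `[0, 1]` so that
`∫ f ∂μ = 1`: writing `c = ∫ x in {0}ᶜ, f x ∂μ ∈ [0, 1]`, the value `(1 - c) / μ {0}` does it. -/

open Function Set

lemma Measurable.update_of_measurableSingleton {α β : Type*} [MeasurableSpace α]
    [MeasurableSingletonClass α] [MeasurableSpace β] [DecidableEq α] {f : α → β}
    (hf : Measurable f) (a : α) (b : β) : Measurable (update f a b) := by
  rw [← piecewise_singleton a (fun _ => b) f]
  exact measurable_const.piecewise (measurableSet_singleton a) hf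

lemma update_zero_smul_self {R M : Type*} [Zero R] [Zero M] [SMulWithZero R M] [DecidableEq M]
    (f : M → R) (t : R) (x : M) : update f 0 t x • x = f x • x := by
  rcases eq_or_ne x 0 with rfl | hx
  · simp
  · rw [update_of_ne hx]

section

variable {α E : Type*} [MeasurableSpace α] [MeasurableSingletonClass α] [DecidableEq α]
  [NormedAddCommGroup E] [NormedSpace ℝ E] [CompleteSpace E] {μ : Measure α}

lemma integral_update {f : α → E} (hf : Integrable f μ) {a : α} (ha : μ {a} ≠ ⊤) (b : E) :
    ∫ x, update f a b x ∂μ = μ.real {a} • b + ∫ x in {a}ᶜ, f x ∂μ := by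
  have hcompl : EqOn (update f a b) f {a}ᶜ := fun x hx => update_of_ne hx _ _
  have hint : Integrable (update f a b) μ := by
    have hon : IntegrableOn (update f a b) {a}ᶜ μ :=
      hf.integrableOn.congr_fun hcompl.symm (measurableSet_singleton a).compl
    rw [← integrableOn_univ, ← union_compl_self {a}]
    exact (integrableOn_singleton (f := update f a b) (hx := ha.lt_top)).union hon
  rw [← integral_add_compl (measurableSet_singleton a) hint, integral_singleton, update_self,
    setIntegral_congr_fun (measurableSet_singleton a).compl hcompl]

theorem exists_update_integral_eq_one [IsFiniteMeasure μ] {f : α → ℝ} (hf : Measurable f)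
    (hf01 : ∀ x, f x ∈ Icc (0 : ℝ) 1) {a : α} (ha : 1 ≤ μ {a}) (hac : μ {a}ᶜ ≤ 1) :
    ∃ t ∈ Icc (0 : ℝ) 1, ∫ x, update f a t x ∂μ = 1 := by
  have hfi : Integrable f μ :=
    Integrable.of_bound hf.aestronglyMeasurable 1
      (ae_of_all _ fun x => abs_le.2 ⟨(neg_nonpos.2 zero_le_one).trans (hf01 x).1, (hf01 x).2⟩)
  set m := μ.real {a}
  set c := ∫ x in {a}ᶜ, f x ∂μ
  have hm : 1 ≤ m := by simpa [m, measureReal_def] using ENNReal.toReal_mono (measure_ne_top μ _) ha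
  have hc0 : 0 ≤ c := setIntegral_nonneg (measurableSet_singleton a).compl fun x _ => (hf01 x).1
  have hc1 : c ≤ 1 :=
    calc c ≤ ∫ _ in {a}ᶜ, (1 : ℝ) ∂μ :=
          setIntegral_mono hfi.integrableOn (integrable_const 1).integrableOn fun x => (hf01 x).2
      _ = μ.real {a}ᶜ := by simp
      _ ≤ 1 := by simpa [measureReal_def] using ENNReal.toReal_mono ENNReal.one_ne_top hac
  refine ⟨(1 - c) / m, ⟨by positivity, (div_le_one (by positivity)).2 (by linarith)⟩, ?_⟩
  rw [integral_update hfi (measure_ne_top μ _), smul_eq_mul, mul_div_cancel₀ _ (by positivity)]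
  ring

end

theorem metronoid_eq_Z_general {n : ℕ} (μ : Measure (EuclideanSpace ℝ (Fin n)))
    [IsFiniteMeasure μ] (hmass : μ Set.univ ≤ 2) (hatom : 1 ≤ μ {0}) :
    metronoid μ = zonoidSet μ := by
  classical
  refine Subset.antisymm (fun y ⟨f, hf, hf01, _, hy⟩ => ⟨f, hf, hf01, hy⟩) ?_
  rintro y ⟨f, hf, hf01, rfl⟩
  have hcompl : μ {0}ᶜ ≤ 1 := by
    rw [measure_compl (measurableSet_singleton 0) (measure_ne_top μ _)]
    exact (tsub_le_tsub hmass hatom).trans (by norm_num)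
  obtain ⟨t, ht, hint⟩ := exists_update_integral_eq_one hf hf01 hatom hcompl
  refine ⟨update f 0 t, hf.update_of_measurableSingleton 0 t, ?_, hint, ?_⟩
  · exact (forall_update_iff f (p := fun _ v => v ∈ Icc (0 : ℝ) 1)).2 ⟨ht, fun x _ => hf01 x⟩
  · simp only [update_zero_smul_self]

theorem metronoid_eq_Z {n : ℕ} (μ : Measure (EuclideanSpace ℝ (Fin n)))
    [IsFiniteMeasure μ] (hmom : Integrable (fun x => ‖x‖) μ)
    (hmass : μ Set.univ ≤ 2) (hatom : 1 ≤ μ {0}) :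
    metronoid μ = zonoidSet μ :=
  metronoid_eq_Z_general μ hmass hatom
end

section
/- Let μ be a centrally-symmetric finite Borel measure on ℝⁿ (i.e., μ(A) = μ(−A) for all Borel A) with finite first moment, μ(ℝⁿ) ≤ 2 and μ({0}) ≥ 1. Then for every unit vector θ, the support function of the metronoid satisfies h_{M(μ)}(θ) = ½ ∫ |⟨x,θ⟩| dμ(x). -/
open MeasureTheory

/-!
Write `g = ⟪·, θ⟫`. For an admissible weight `0 ≤ f ≤ 1` one has `f g ≤ g⁺` pointwise, so
`h_{M(μ)}(θ) ≤ ∫ g⁺`. Symmetry gives `μ {g > 0} = μ {g < 0}`, hence `μ {g > 0} ≤ 1`, and the weight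
`1_{g > 0} + c • 1_{0}` with `c = (1 - μ {g > 0}) / μ {0} ∈ [0, 1]` is admissible; since the atom sits
at the origin it does not move the barycentre, which therefore pairs with `θ` to `∫ g⁺`. Finally
symmetry gives `∫ g⁻ = ∫ g⁺`, i.e. `∫ |g| = 2 ∫ g⁺`.
-/

theorem mul_le_posPart {a b : ℝ} (ha : a ∈ Set.Icc (0 : ℝ) 1) : a * b ≤ b⁺ := by
  nlinarith [ha.1, ha.2, posPart_nonneg b, le_posPart b]

section PosPart

variable {α : Type*} {m : MeasurableSpace α} {μ : Measure α} {f g : α → ℝ}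

theorem integral_mul_le_integral_posPart (hf : AEStronglyMeasurable f μ)
    (hf01 : ∀ x, f x ∈ Set.Icc (0 : ℝ) 1) (hg : Integrable g μ) :
    ∫ x, f x * g x ∂μ ≤ ∫ x, (g x)⁺ ∂μ :=
  integral_mono (hg.bdd_mul hf (c := 1) (ae_of_all _ fun x => by
      rw [Real.norm_of_nonneg (hf01 x).1]; exact (hf01 x).2))
    hg.pos_part fun x => mul_le_posPart (hf01 x)

theorem setIntegral_pos_eq_integral_posPart (hg : Measurable g) :
    ∫ x in {x | 0 < g x}, g x ∂μ = ∫ x, (g x)⁺ ∂μ := by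
  rw [← integral_indicator (measurableSet_lt measurable_const hg)]
  congr 1 with x
  by_cases hx : 0 < g x
  · simp [hx, hx.le]
  · simp [hx, posPart_eq_zero.mpr (not_lt.mp hx)]

end PosPart

theorem inner_integral_left {α E : Type*} [MeasurableSpace α] {μ : Measure α}
    [NormedAddCommGroup E] [InnerProductSpace ℝ E] [CompleteSpace E] {f : α → E}
    (hf : Integrable f μ) (c : E) :
    inner ℝ (∫ x, f x ∂μ) c = ∫ x, inner ℝ (f x) c ∂μ := by
  rw [real_inner_comm, ← integral_inner hf]
  simp_rw [real_inner_comm]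

section Odd

variable {E : Type*} [MeasurableSpace E] [AddGroup E] [MeasurableNeg E]
  {μ : Measure E} [μ.IsNegInvariant] {g : E → ℝ}

theorem integral_abs_eq_two_mul_integral_posPart_of_odd (hodd : ∀ x, g (-x) = -g x)
    (hg : Integrable g μ) :
    ∫ x, |g x| ∂μ = 2 * ∫ x, (g x)⁺ ∂μ := by
  have hneg : ∫ x, (g x)⁻ ∂μ = ∫ x, (g x)⁺ ∂μ := by
    simp_rw [← posPart_neg, ← hodd]
    exact integral_neg_eq_self (fun x => (g x)⁺) μ
  have hpos : Integrable (fun x => (g x)⁺) μ := hg.pos_part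
  have hneg_int : Integrable (fun x => (g x)⁻) μ := hg.neg.pos_part
  simp_rw [← posPart_add_negPart]
  rw [integral_add hpos hneg_int, hneg, two_mul]

theorem two_mul_measure_pos_le_of_odd (hodd : ∀ x, g (-x) = -g x) (hg : Measurable g) :
    2 * μ {x | 0 < g x} ≤ μ Set.univ := by
  have hreflect : -{x | 0 < g x} = {x | g x < 0} := by
    ext x
    simp [hodd]
  have hdisj : Disjoint {x | 0 < g x} {x | g x < 0} :=
    Set.disjoint_left.mpr fun x (hpos : 0 < g x) (hneg : g x < 0) => lt_asymm hpos hneg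
  calc 2 * μ {x | 0 < g x} = μ {x | 0 < g x} + μ {x | g x < 0} := by
        rw [two_mul, ← hreflect, Measure.measure_neg]
    _ = μ ({x | 0 < g x} ∪ {x | g x < 0}) :=
        (measure_union hdisj (measurableSet_lt hg measurable_const)).symm
    _ ≤ μ Set.univ := measure_mono (Set.subset_univ _)

end Odd

section Metronoid

variable {n : ℕ} {μ : Measure (EuclideanSpace ℝ (Fin n))}

theorem inner_le_integral_posPart_of_mem_metronoid (hid : Integrable (fun x => x) μ)
    {y : EuclideanSpace ℝ (Fin n)} (hy : y ∈ metronoid μ) (θ : EuclideanSpace ℝ (Fin n)) :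
    inner ℝ y θ ≤ ∫ x, (inner ℝ x θ)⁺ ∂μ := by
  obtain ⟨f, hf, hf01, -, rfl⟩ := hy
  have hfx : Integrable (fun x => f x • x) μ :=
    hid.bdd_smul 1 hf.aestronglyMeasurable (ae_of_all _ fun x => by
      rw [Real.norm_of_nonneg (hf01 x).1]; exact (hf01 x).2)
  calc inner ℝ (∫ x, f x • x ∂μ) θ = ∫ x, f x * inner ℝ x θ ∂μ := by
        simp_rw [inner_integral_left hfx, real_inner_smul_left]
    _ ≤ ∫ x, (inner ℝ x θ)⁺ ∂μ :=
        integral_mul_le_integral_posPart hf.aestronglyMeasurable hf01 (hid.inner_const θ)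

theorem setIntegral_id_mem_metronoid [IsFiniteMeasure μ] {S : Set (EuclideanSpace ℝ (Fin n))}
    (hS : MeasurableSet S) (h0 : 0 ∉ S) (hS1 : μ S ≤ 1) (hatom : 1 ≤ μ {0}) :
    ∫ x in S, x ∂μ ∈ metronoid μ := by
  have hatom' : 1 ≤ μ.real {0} := ENNReal.toReal_mono (measure_ne_top μ _) hatom
  have hS1' : μ.real S ≤ 1 := ENNReal.toReal_mono ENNReal.one_ne_top hS1
  set c := (1 - μ.real S) / μ.real {0}
  have hc : c ∈ Set.Icc (0 : ℝ) 1 :=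
    ⟨div_nonneg (by linarith) (by linarith),
      (div_le_one (by linarith)).mpr (by linarith [measureReal_nonneg (μ := μ) (s := S)])⟩
  refine ⟨fun x => S.indicator (fun _ => 1) x + ({0} : Set _).indicator (fun _ => c) x,
    (measurable_const.indicator hS).add (measurable_const.indicator (measurableSet_singleton 0)),
    fun x => ?_, ?_, ?_⟩
  · by_cases hx0 : x = 0
    · subst hx0
      simpa [h0] using hc
    · by_cases hx : x ∈ S <;> simp [hx, hx0]
  · rw [integral_add ((integrable_const 1).indicator hS)
      ((integrable_const c).indicator (measurableSet_singleton 0)),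
      integral_indicator_const _ hS, integral_indicator_const _ (measurableSet_singleton 0)]
    have hfill : μ.real {0} * c = 1 - μ.real S := mul_div_cancel₀ _ (by linarith)
    simp only [smul_eq_mul, mul_one, hfill]
    ring
  · rw [← integral_indicator hS]
    congr 1
    funext x
    by_cases hx0 : x = 0
    · simp [hx0, h0]
    · by_cases hx : x ∈ S <;> simp [hx, hx0]

end Metronoid

theorem support_metronoid_symmetric_general {n : ℕ}
    (μ : Measure (EuclideanSpace ℝ (Fin n)))
    (hmom : Integrable (fun x => ‖x‖) μ)
    (hsymm : μ.map (fun x => -x) = μ)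
    (hmass : μ Set.univ ≤ 2) (hatom : 1 ≤ μ {0})
    (θ : EuclideanSpace ℝ (Fin n)) :
    sSup ((fun y => inner ℝ y θ : EuclideanSpace ℝ (Fin n) → ℝ) '' metronoid μ) =
      (1 / 2) * ∫ x, |(inner ℝ x θ : ℝ)| ∂μ := by
  have : IsFiniteMeasure μ := ⟨hmass.trans_lt (by norm_num)⟩
  have : μ.IsNegInvariant := ⟨hsymm⟩
  have hodd (x : EuclideanSpace ℝ (Fin n)) : inner ℝ (-x) θ = -inner ℝ x θ := inner_neg_left x θ
  have hg : Measurable fun x : EuclideanSpace ℝ (Fin n) => inner ℝ x θ :=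
    measurable_id.inner measurable_const
  have hid : Integrable (fun x => x) μ :=
    (integrable_norm_iff aestronglyMeasurable_id).mp hmom
  have hP1 : μ {x | 0 < inner ℝ x θ} ≤ 1 := by
    refine (ENNReal.mul_le_mul_iff_right two_ne_zero ENNReal.ofNat_ne_top).mp ?_
    rw [mul_one]
    exact (two_mul_measure_pos_le_of_odd hodd hg).trans hmass
  have hP0 : (0 : EuclideanSpace ℝ (Fin n)) ∉ {x | 0 < inner ℝ x θ} := by simp
  rw [integral_abs_eq_two_mul_integral_posPart_of_odd hodd (hid.inner_const θ), ← mul_assoc,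
    one_div_mul_cancel two_ne_zero, one_mul]
  refine IsGreatest.csSup_eq ⟨⟨_, setIntegral_id_mem_metronoid
    (measurableSet_lt measurable_const hg) hP0 hP1 hatom, ?_⟩, ?_⟩
  · exact (inner_integral_left hid.integrableOn θ).trans (setIntegral_pos_eq_integral_posPart hg)
  · rintro _ ⟨y, hy, rfl⟩
    exact inner_le_integral_posPart_of_mem_metronoid hid hy θ

theorem support_metronoid_symmetric {n : ℕ}
    (μ : Measure (EuclideanSpace ℝ (Fin n))) [IsFiniteMeasure μ]
    (hmom : Integrable (fun x => ‖x‖) μ)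
    (hsymm : μ.map (fun x => -x) = μ)
    (hmass : μ Set.univ ≤ 2) (hatom : 1 ≤ μ {0})
    (θ : EuclideanSpace ℝ (Fin n)) (hθ : ‖θ‖ = 1) :
    sSup ((fun y => inner ℝ y θ : EuclideanSpace ℝ (Fin n) → ℝ) '' metronoid μ) =
      (1 / 2) * ∫ x, |(inner ℝ x θ : ℝ)| ∂μ :=
  support_metronoid_symmetric_general μ hmom hsymm hmass hatom θ
end

section
/- Let R > 1 and f : [0,R] → ℝ be a nonnegative concave function, and let f̃ : [0,R] → ℝ be the linear function with f̃(1) = f(1) and f̃(R) = 0. Then for any increasing function g : [0,∞) → [0,∞), one has (∫₁^R g(f(t)) dt) / (∫₀^R g(f(t)) dt) ≥ (∫₁^R g(f̃(t)) dt) / (∫₀^R g(f̃(t)) dt), provided the denominators are positive. -/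
/-!
Concavity and `f R ≥ 0` put the graph of `f` above the chord `f̃` from `(1, f 1)` to `(R, 0)` on
`[1, R]` and below its extension on `[0, 1]`. Composing with the monotone `g`, the tail mass
`∫₁ᴿ` can only grow and the head mass `∫₀¹` can only shrink when passing from `f̃` to `f`, and
`b / (a + b)` increases in `b` and decreases in `a`.
-/

open Set MeasureTheory intervalIntegral

lemma div_add_le_div_add_of_le {a a' b b' : ℝ} (ha : 0 ≤ a) (hb' : 0 ≤ b') (haa' : a ≤ a')
    (hb'b : b' ≤ b) (hpos' : 0 < a' + b') (hpos : 0 < a + b) :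
    b' / (a' + b') ≤ b / (a + b) := by
  rw [div_le_div_iff₀ hpos' hpos]
  nlinarith [mul_le_mul haa' hb'b hb' (ha.trans haa')]

lemma integral_div_integral_le_of_crossing {u v : ℝ → ℝ} {a b c : ℝ} (hac : a ≤ c) (hcb : c ≤ b)
    (hu0 : ∀ t ∈ Icc a c, 0 ≤ u t) (hv0 : ∀ t ∈ Icc c b, 0 ≤ v t)
    (hhead : ∀ t ∈ Icc a c, u t ≤ v t) (htail : ∀ t ∈ Icc c b, v t ≤ u t)
    (hu : 0 < ∫ t in a..b, u t) (hv : 0 < ∫ t in a..b, v t) :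
    (∫ t in c..b, v t) / (∫ t in a..b, v t) ≤ (∫ t in c..b, u t) / (∫ t in a..b, u t) := by
  have hc : c ∈ uIcc a b := uIcc_of_le (hac.trans hcb) ▸ ⟨hac, hcb⟩
  have hui := intervalIntegrable_of_integral_ne_zero hu.ne'
  have hvi := intervalIntegrable_of_integral_ne_zero hv.ne'
  have hu_head := hui.mono_set (uIcc_subset_uIcc_left hc)
  have hu_tail := hui.mono_set (uIcc_subset_uIcc_right hc)
  have hv_head := hvi.mono_set (uIcc_subset_uIcc_left hc)
  have hv_tail := hvi.mono_set (uIcc_subset_uIcc_right hc)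
  rw [← integral_add_adjacent_intervals hu_head hu_tail] at hu ⊢
  rw [← integral_add_adjacent_intervals hv_head hv_tail] at hv ⊢
  exact div_add_le_div_add_of_le (integral_nonneg hac hu0) (integral_nonneg hcb hv0)
    (integral_mono_on hac hu_head hv_head hhead) (integral_mono_on hcb hv_tail hu_tail htail) hv hu

namespace ConcaveOn

variable {s : Set ℝ} {f : ℝ → ℝ}

lemma sub_mul_le_sub_mul (hf : ConcaveOn ℝ s f) {x y z : ℝ} (hx : x ∈ s) (hz : z ∈ s)
    (hxy : x ≤ y) (hyz : y ≤ z) (hfz : 0 ≤ f z) : (z - y) * f x ≤ (z - x) * f y := by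
  rcases hxy.eq_or_lt with rfl | hxy
  · rfl
  rcases hyz.eq_or_lt with rfl | hyz
  · simpa using mul_nonneg (sub_nonneg.2 hxy.le) hfz
  have key := hf.neg.secant_mono_aux1 hx hz hxy hyz
  simp only [Pi.neg_apply, mul_neg] at key
  nlinarith [mul_nonneg (sub_nonneg.2 hxy.le) hfz]

variable {b c t : ℝ}

lemma mul_sub_div_sub_le (hf : ConcaveOn ℝ s f) (hc : c ∈ s) (hb : b ∈ s) (hfb : 0 ≤ f b)
    (hcb : c < b) (hct : c ≤ t) (htb : t ≤ b) : f c * (b - t) / (b - c) ≤ f t := by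
  rw [div_le_iff₀ (sub_pos.2 hcb), mul_comm, mul_comm (f t)]
  exact hf.sub_mul_le_sub_mul hc hb hct htb hfb

lemma le_mul_sub_div_sub (hf : ConcaveOn ℝ s f) (ht : t ∈ s) (hb : b ∈ s) (hfb : 0 ≤ f b)
    (hcb : c < b) (htc : t ≤ c) : f t ≤ f c * (b - t) / (b - c) := by
  rw [le_div_iff₀ (sub_pos.2 hcb), mul_comm, mul_comm (f c)]
  exact hf.sub_mul_le_sub_mul ht hb htc hcb.le hfb

end ConcaveOn

theorem tail_bound_convexity (R : ℝ) (hR : 1 < R) (f : ℝ → ℝ)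
    (hconc : ConcaveOn ℝ (Set.Icc 0 R) f) (hf0 : ∀ t ∈ Set.Icc (0:ℝ) R, 0 ≤ f t)
    (ftilde : ℝ → ℝ) (hft : ∀ t, ftilde t = f 1 * (R - t) / (R - 1))
    (g : ℝ → ℝ) (hg : MonotoneOn g (Set.Ici 0)) (hg0 : ∀ x ≥ (0:ℝ), 0 ≤ g x)
    (hden : 0 < ∫ t in (0:ℝ)..R, g (f t))
    (hdent : 0 < ∫ t in (0:ℝ)..R, g (ftilde t)) :
    (∫ t in (1:ℝ)..R, g (ftilde t)) / (∫ t in (0:ℝ)..R, g (ftilde t)) ≤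
      (∫ t in (1:ℝ)..R, g (f t)) / (∫ t in (0:ℝ)..R, g (f t)) := by
  have h1 : (1 : ℝ) ∈ Icc 0 R := ⟨zero_le_one, hR.le⟩
  have hRmem : R ∈ Icc 0 R := ⟨zero_le_one.trans hR.le, le_rfl⟩
  have hfR := hf0 R hRmem
  have hft0 : ∀ t ∈ Icc 0 R, 0 ≤ ftilde t := fun t ht => by
    rw [hft]
    have := sub_nonneg.2 ht.2
    have := sub_pos.2 hR
    have := hf0 1 h1
    positivity
  have head (t : ℝ) (ht : t ∈ Icc 0 1) : f t ≤ ftilde t := by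
    rw [hft]
    exact hconc.le_mul_sub_div_sub ⟨ht.1, ht.2.trans hR.le⟩ hRmem hfR hR ht.2
  have tail (t : ℝ) (ht : t ∈ Icc 1 R) : ftilde t ≤ f t := by
    rw [hft]
    exact hconc.mul_sub_div_sub_le h1 hRmem hfR hR ht.1 ht.2
  have sub_head : Icc (0 : ℝ) 1 ⊆ Icc 0 R := Icc_subset_Icc_right hR.le
  have sub_tail : Icc (1 : ℝ) R ⊆ Icc 0 R := Icc_subset_Icc_left zero_le_one
  refine integral_div_integral_le_of_crossing zero_le_one hR.le
    (fun t ht => hg0 _ (hf0 t (sub_head ht))) (fun t ht => hg0 _ (hft0 t (sub_tail ht)))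
    (fun t ht => hg (hf0 t (sub_head ht)) (hft0 t (sub_head ht)) (head t ht))
    (fun t ht => hg (hft0 t (sub_tail ht)) (hf0 t (sub_tail ht)) (tail t ht)) hden hdent
end

section
/- Let x₁,…,x_m ∈ ℝⁿ, a₀, a₁,…,a_m ≥ 0, x₀ = 0, μ = Σ_{i=0}^m aᵢ δ_{xᵢ}, and r₁,…,r_m ≥ 1. Define ν = Σ_{i=1}^m (aᵢ/rᵢ) δ_{rᵢ xᵢ} + δ₀. Then M(μ) ⊆ M(ν), with equality when Σ_{i=1}^m aᵢ ≤ 1 and a₀ ≥ 1; moreover, for any convex body K ⊆ ℝⁿ containing 0, ∫ ‖x‖_K dμ = ∫ ‖x‖_K dν. -/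
open MeasureTheory

section helpers

variable {α : Type*}

lemma my_integrable_dirac [MeasurableSpace α] [MeasurableSingletonClass α]
    {F : Type*} [NormedAddCommGroup F] (f : α → F) (y : α) :
    Integrable f (Measure.dirac y) :=
  (integrable_congr (ae_eq_dirac f)).2 (integrable_const _)

lemma integral_shape [MeasurableSpace α] [MeasurableSingletonClass α]
    {F : Type*} [NormedAddCommGroup F] [NormedSpace ℝ F] [CompleteSpace F]
    {ι : Type*} [Fintype ι] (c0 : ℝ) (h0 : 0 ≤ c0)
    (w : ι → ℝ) (hw : ∀ i, 0 ≤ w i) (y0 : α) (y : ι → α) (f : α → F) :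
    ∫ z, f z ∂(ENNReal.ofReal c0 • Measure.dirac y0 +
      ∑ i, ENNReal.ofReal (w i) • Measure.dirac (y i)) =
      c0 • f y0 + ∑ i, w i • f (y i) := by
  have hint : ∀ (c : ℝ) (p : α), Integrable f (ENNReal.ofReal c • Measure.dirac p) :=
    fun c p => (my_integrable_dirac f p).smul_measure ENNReal.ofReal_ne_top
  rw [integral_add_measure (hint c0 y0)
      (integrable_finset_sum_measure.2 fun i _ => hint _ _),
    integral_finset_sum_measure (fun i _ => hint _ _)]
  congr 1
  · rw [integral_smul_measure, integral_dirac, ENNReal.toReal_ofReal h0]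
  · exact Finset.sum_congr rfl fun i _ => by
      rw [integral_smul_measure, integral_dirac, ENNReal.toReal_ofReal (hw i)]

noncomputable def hfun {ι : Type*} [Fintype ι] [DecidableEq α]
    (P : ι → α) (w c : ι → ℝ) : α → ℝ :=
  fun z => (∑ j, if P j = z then w j * c j else 0) / (∑ j, if P j = z then w j else 0)

lemma fiber_sum {ι : Type*} [Fintype ι] [DecidableEq α] {F : Type*}
    [AddCommMonoid F] [Module ℝ F]
    (P : ι → α) (w c : ι → ℝ) (hw : ∀ i, 0 ≤ w i) (u : α → F) :
    ∑ i, (w i * hfun P w c (P i)) • u (P i)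
      = ∑ i, (w i * c i) • u (P i) := by
  unfold hfun
  have key : ∀ (φ : ι → α → F), ∑ i, φ i (P i) =
      ∑ p ∈ Finset.univ.image P, ∑ i ∈ Finset.univ.filter (fun i => P i = p), φ i p := by
    intro φ
    rw [← Finset.sum_fiberwise_of_maps_to
      (fun i _ => Finset.mem_image_of_mem P (Finset.mem_univ i)) (fun i => φ i (P i))]
    exact Finset.sum_congr rfl fun p _ => Finset.sum_congr rfl fun i hi => by
      rw [(Finset.mem_filter.1 hi).2]
  rw [key (fun i p => (w i * ((∑ j, if P j = p then w j * c j else 0) /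
        (∑ j, if P j = p then w j else 0))) • u p),
    key (fun i p => (w i * c i) • u p)]
  refine Finset.sum_congr rfl fun p _ => ?_
  have hden : (∑ j, if P j = p then w j else 0)
      = ∑ j ∈ Finset.univ.filter (fun j => P j = p), w j := (Finset.sum_filter _ _).symm
  have hnum : (∑ j, if P j = p then w j * c j else 0)
      = ∑ j ∈ Finset.univ.filter (fun j => P j = p), w j * c j := (Finset.sum_filter _ _).symm
  rw [← Finset.sum_smul, ← Finset.sum_mul, ← Finset.sum_smul, ← hden, ← hnum]
  by_cases hd : (∑ j, if P j = p then w j else 0) = 0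
  · have hz : ∀ j ∈ Finset.univ.filter (fun j => P j = p), w j = 0 := by
      rw [← Finset.sum_eq_zero_iff_of_nonneg (fun j _ => hw j), ← hden]
      exact hd
    have hn0 : (∑ j, if P j = p then w j * c j else 0) = 0 := by
      rw [hnum]
      exact Finset.sum_eq_zero fun j hj => by rw [hz j hj, zero_mul]
    rw [hd, hn0]
    simp
  · rw [mul_comm, div_mul_cancel₀ _ hd]

lemma hfun_mem {ι : Type*} [Fintype ι] [DecidableEq α]
    (P : ι → α) (w c : ι → ℝ) (hw : ∀ i, 0 ≤ w i) (hc : ∀ i, c i ∈ Set.Icc (0:ℝ) 1)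
    (z : α) :
    hfun P w c z ∈ Set.Icc (0:ℝ) 1 := by
  unfold hfun
  have hden0 : 0 ≤ ∑ j, if P j = z then w j else 0 :=
    Finset.sum_nonneg fun j _ => by split <;> simp [hw j]
  have hnum0 : 0 ≤ ∑ j, if P j = z then w j * c j else 0 :=
    Finset.sum_nonneg fun j _ => by
      split
      · exact mul_nonneg (hw j) (hc j).1
      · exact le_refl _
  have hnd : (∑ j, if P j = z then w j * c j else 0) ≤ ∑ j, if P j = z then w j else 0 :=
    Finset.sum_le_sum fun j _ => by
      split
      · calc w j * c j ≤ w j * 1 := mul_le_mul_of_nonneg_left (hc j).2 (hw j)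
          _ = w j := mul_one _
      · exact le_refl _
  refine ⟨div_nonneg hnum0 hden0, ?_⟩
  rcases eq_or_lt_of_le hden0 with h | h
  · rw [← h] at hnd
    have : (∑ j, if P j = z then w j * c j else 0) = 0 := le_antisymm hnd hnum0
    simp [this]
  · exact (div_le_one h).2 hnd

lemma hfun_meas {ι : Type*} [Fintype ι] [MeasurableSpace α] [MeasurableSingletonClass α]
    [DecidableEq α] (P : ι → α) (w c : ι → ℝ) :
    Measurable (hfun P w c) := by
  unfold hfun
  have hms : ∀ j : ι, MeasurableSet {z : α | P j = z} := by
    intro j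
    have : {z : α | P j = z} = {P j} := by ext t; simp [eq_comm]
    rw [this]; exact MeasurableSet.singleton _
  exact Measurable.div
    (Finset.measurable_sum _ fun j _ =>
      Measurable.ite (hms j) measurable_const measurable_const)
    (Finset.measurable_sum _ fun j _ =>
      Measurable.ite (hms j) measurable_const measurable_const)

end helpers

set_option maxHeartbeats 2000000 in
theorem scaling_effect {n m : ℕ} (x : Fin m → EuclideanSpace ℝ (Fin n))
    (a : Fin m → ℝ) (ha : ∀ i, 0 ≤ a i) (a₀ : ℝ) (ha₀ : 0 ≤ a₀)
    (r : Fin m → ℝ) (hr : ∀ i, 1 ≤ r i)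
    (μ ν : Measure (EuclideanSpace ℝ (Fin n)))
    (hμ : μ = ENNReal.ofReal a₀ • Measure.dirac 0 +
      ∑ i : Fin m, ENNReal.ofReal (a i) • Measure.dirac (x i))
    (hν : ν = Measure.dirac 0 +
      ∑ i : Fin m, ENNReal.ofReal (a i / r i) • Measure.dirac (r i • x i)) :
    metronoid μ ⊆ metronoid ν ∧
    ((∑ i, a i) ≤ 1 → 1 ≤ a₀ → metronoid μ = metronoid ν) ∧
    (∀ K : Set (EuclideanSpace ℝ (Fin n)), IsCompact K → Convex ℝ K → (0:EuclideanSpace ℝ (Fin n)) ∈ K →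
      ∫ y, gauge K y ∂μ = ∫ y, gauge K y ∂ν) := by
  classical
  have hr0 : ∀ i, (0:ℝ) < r i := fun i => lt_of_lt_of_le one_pos (hr i)
  have haw : ∀ i, 0 ≤ a i / r i := fun i => div_nonneg (ha i) (hr0 i).le
  have hν' : ν = ENNReal.ofReal 1 • Measure.dirac 0 +
      ∑ i, ENNReal.ofReal (a i / r i) • Measure.dirac (r i • x i) := by
    rw [hν, ENNReal.ofReal_one, one_smul]
  have sub1 : metronoid μ ⊆ metronoid ν := by
    rintro y ⟨f, hfm, hf01, hfmass, hfmom⟩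
    rw [hμ, integral_shape a₀ ha₀ a ha 0 x] at hfmass hfmom
    simp only [smul_eq_mul] at hfmass
    simp only [smul_zero, zero_add, smul_smul] at hfmom
    set t₀ : ℝ := 1 - ∑ i, (a i / r i) * f (x i) with ht₀
    have hS1 : ∑ i, a i * f (x i) ≤ 1 := by
      have h0 : 0 ≤ a₀ * f 0 := mul_nonneg ha₀ (hf01 0).1
      linarith
    have hSr : ∑ i, (a i / r i) * f (x i) ≤ ∑ i, a i * f (x i) :=
      Finset.sum_le_sum fun i _ =>
        mul_le_mul_of_nonneg_right (div_le_self (ha i) (hr i)) (hf01 (x i)).1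
    have hSr0 : 0 ≤ ∑ i, (a i / r i) * f (x i) :=
      Finset.sum_nonneg fun i _ => mul_nonneg (haw i) (hf01 (x i)).1
    have ht01 : t₀ ∈ Set.Icc (0:ℝ) 1 := ⟨by rw [ht₀]; linarith, by rw [ht₀]; linarith⟩
    have hwpos : ∀ j, 0 ≤ Fin.cons (α := fun _ => ℝ) (1:ℝ) (fun i => a i / r i) j := fun j => by
      refine Fin.cases (motive := fun j => 0 ≤ Fin.cons (α := fun _ => ℝ) (1:ℝ) (fun i => a i / r i) j)
        ?_ ?_ j <;> simp [haw]
    have hc01 : ∀ j, Fin.cons (α := fun _ => ℝ) t₀ (fun i => f (x i)) j ∈ Set.Icc (0:ℝ) 1 := fun j => by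
      refine Fin.cases (motive := fun j => Fin.cons (α := fun _ => ℝ) t₀ (fun i => f (x i)) j ∈ Set.Icc (0:ℝ) 1)
        ?_ ?_ j <;> simp only [Fin.cons_zero, Fin.cons_succ]
      · exact ht01
      · exact fun i => hf01 (x i)
    refine ⟨hfun (Fin.cons (0:EuclideanSpace ℝ (Fin n)) (fun i => r i • x i))
        (Fin.cons (1:ℝ) (fun i => a i / r i)) (Fin.cons t₀ (fun i => f (x i))),
      hfun_meas _ _ _, fun z => hfun_mem _ _ _ hwpos hc01 z, ?_, ?_⟩
    · rw [hν', integral_shape 1 zero_le_one _ haw 0 _]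
      have key := fiber_sum (Fin.cons (0:EuclideanSpace ℝ (Fin n)) (fun i => r i • x i))
        (Fin.cons (1:ℝ) (fun i => a i / r i)) (Fin.cons t₀ (fun i => f (x i)))
        hwpos (fun _ => (1:ℝ))
      simp only [Fin.sum_univ_succ, Fin.cons_zero, Fin.cons_succ, smul_eq_mul, mul_one,
        one_mul] at key ⊢
      linarith [key]
    · rw [hν', integral_shape 1 zero_le_one _ haw 0 _]
      have key := fiber_sum (Fin.cons (0:EuclideanSpace ℝ (Fin n)) (fun i => r i • x i))
        (Fin.cons (1:ℝ) (fun i => a i / r i)) (Fin.cons t₀ (fun i => f (x i)))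
        hwpos (fun z : EuclideanSpace ℝ (Fin n) => z)
      simp only [Fin.sum_univ_succ, Fin.cons_zero, Fin.cons_succ, smul_zero, zero_add,
        smul_smul, mul_assoc, one_mul, mul_one] at key ⊢
      rw [key]
      refine (Finset.sum_congr rfl fun i _ => ?_).trans hfmom
      congr 1
      have hrne := (hr0 i).ne'
      field_simp
  have sub2 : (∑ i, a i) ≤ 1 → 1 ≤ a₀ → metronoid ν ⊆ metronoid μ := by
    intro hA hA0
    rintro y ⟨g, hgm, hg01, hgmass, hgmom⟩
    rw [hν', integral_shape 1 zero_le_one _ haw 0 _] at hgmass hgmom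
    simp only [smul_eq_mul, one_mul] at hgmass
    simp only [smul_zero, zero_add, smul_smul] at hgmom
    have ha₀p : (0:ℝ) < a₀ := lt_of_lt_of_le one_pos hA0
    have hSle : ∑ i, a i * g (r i • x i) ≤ 1 := by
      have h1 : ∑ i, a i * g (r i • x i) ≤ ∑ i, a i :=
        Finset.sum_le_sum fun i _ => by
          calc a i * g (r i • x i) ≤ a i * 1 :=
                mul_le_mul_of_nonneg_left (hg01 _).2 (ha i)
            _ = a i := mul_one _
      linarith
    have hS0 : 0 ≤ ∑ i, a i * g (r i • x i) :=
      Finset.sum_nonneg fun i _ => mul_nonneg (ha i) (hg01 _).1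
    set s₀ : ℝ := (1 - ∑ i, a i * g (r i • x i)) / a₀ with hs₀
    have hs01 : s₀ ∈ Set.Icc (0:ℝ) 1 :=
      ⟨div_nonneg (by linarith) ha₀p.le, (div_le_one ha₀p).2 (by linarith)⟩
    have hvpos : ∀ j, 0 ≤ Fin.cons (α := fun _ => ℝ) a₀ a j := fun j => by
      refine Fin.cases (motive := fun j => 0 ≤ Fin.cons (α := fun _ => ℝ) a₀ a j) ?_ ?_ j <;> simp [ha₀, ha]
    have hd01 : ∀ j, Fin.cons (α := fun _ => ℝ) s₀ (fun i => g (r i • x i)) j ∈ Set.Icc (0:ℝ) 1 := fun j => by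
      refine Fin.cases
        (motive := fun j => Fin.cons (α := fun _ => ℝ) s₀ (fun i => g (r i • x i)) j ∈ Set.Icc (0:ℝ) 1)
        ?_ ?_ j <;> simp only [Fin.cons_zero, Fin.cons_succ]
      · exact hs01
      · exact fun i => hg01 _
    refine ⟨hfun (Fin.cons (0:EuclideanSpace ℝ (Fin n)) x)
        (Fin.cons a₀ a) (Fin.cons s₀ (fun i => g (r i • x i))),
      hfun_meas _ _ _, fun z => hfun_mem _ _ _ hvpos hd01 z, ?_, ?_⟩
    · rw [hμ, integral_shape a₀ ha₀ a ha 0 x]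
      have key := fiber_sum (Fin.cons (0:EuclideanSpace ℝ (Fin n)) x)
        (Fin.cons a₀ a) (Fin.cons s₀ (fun i => g (r i • x i))) hvpos (fun _ => (1:ℝ))
      simp only [Fin.sum_univ_succ, Fin.cons_zero, Fin.cons_succ, smul_eq_mul, mul_one,
        one_mul] at key ⊢
      have hcancel : a₀ * s₀ = 1 - ∑ i, a i * g (r i • x i) := by
        rw [hs₀, mul_comm, div_mul_cancel₀ _ (ne_of_gt ha₀p)]
      linarith [key]
    · rw [hμ, integral_shape a₀ ha₀ a ha 0 x]
      have key := fiber_sum (Fin.cons (0:EuclideanSpace ℝ (Fin n)) x)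
        (Fin.cons a₀ a) (Fin.cons s₀ (fun i => g (r i • x i))) hvpos
        (fun z : EuclideanSpace ℝ (Fin n) => z)
      simp only [Fin.sum_univ_succ, Fin.cons_zero, Fin.cons_succ, smul_zero, zero_add,
        smul_smul, mul_assoc, one_mul, mul_one] at key ⊢
      rw [key]
      refine (Finset.sum_congr rfl fun i _ => ?_).trans hgmom
      congr 1
      have hrne := (hr0 i).ne'
      field_simp
  refine ⟨sub1, fun h1 h2 => le_antisymm sub1 (sub2 h1 h2), ?_⟩
  intro K hK hKc hK0
  rw [hμ, hν', integral_shape a₀ ha₀ a ha 0 x, integral_shape 1 zero_le_one _ haw 0 _]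
  rw [gauge_zero]
  simp only [smul_zero, zero_add, smul_eq_mul, mul_zero]
  refine Finset.sum_congr rfl fun i _ => ?_
  rw [gauge_smul_of_nonneg (hr0 i).le, smul_eq_mul]
  have hrne := (hr0 i).ne'
  field_simp
end
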